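/- arXiv:1708.01231 — 2 statements merged into one kernel-verified Lean document; each statement's English description precedes it below -/
import Mathlib

section
/- Let n ≥ 2 and k be positive integers, let E_k := {(i,j) ∈ ℤ² : |j−i| ≥ k+1}, let h : {0,1,…,n−1} → ℝ be a nonincreasing function, and let v : {1,…,n} → ℤ be any function. Then the hostility gap satisfies Δ(E_k,v) ≥ Δ(E_k,Mv), where Mv is the nondecreasing rearrangement of v. -/
noncomputable section

open Classical in
/-- The total hostility `H(h,E,u)` of the arrangement `u` of `n` dinosaurs (placed at the
positions `{1,…,n}`) with respect to the enemy list `E` and the hostility function `h`. -/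
def Hostility (n : ℕ) (h : ℕ → ℝ) (E : Set (ℤ × ℤ)) (u : ℕ → ℤ) : ℝ :=
  ∑ x ∈ Finset.Icc 1 n, ∑ y ∈ Finset.Icc x n, if (u x, u y) ∈ E then h (y - x) else 0

/-- The nondecreasing rearrangement `Mu` of `u : {1,…,n} → ℤ`. -/
def Mrearr (n : ℕ) (u : ℕ → ℤ) (x : ℕ) : ℤ :=
  sInf {j : ℤ | x ≤ ((Finset.Icc 1 n).filter (fun y => u y ≤ j)).card}

/-- The enemy list `E_k = {(i,j) ∈ ℤ² : |j - i| ≥ k + 1}`. -/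
def enemyList (k : ℕ) : Set (ℤ × ℤ) := {q : ℤ × ℤ | (k : ℤ) + 1 ≤ |q.2 - q.1|}

/-- `μ`: the maximum value of `v` on `{1,…,n}`. -/
def maxVal (n : ℕ) (v : ℕ → ℤ) : ℤ := sSup (v '' {i | 1 ≤ i ∧ i ≤ n})

/-- `m`: the largest index in `{1,…,n}` where `v` attains its maximum value. -/
def maxIdx (n : ℕ) (v : ℕ → ℤ) : ℕ := sSup {i | 1 ≤ i ∧ i ≤ n ∧ v i = maxVal n v}

/-- The reduction `Rv` of `v`: the rightmost dinosaur of the highest species is removed and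
all subsequent dinosaurs are shifted one position to the left. -/
def reduction (n : ℕ) (v : ℕ → ℤ) : ℕ → ℤ :=
  fun i => if i < maxIdx n v then v i else v (i + 1)

/-- The hostility gap `Δ(E,v) = H(h,E,v) − H(h,E,Rv)`. -/
def hostilityGap (n : ℕ) (h : ℕ → ℝ) (E : Set (ℤ × ℤ)) (v : ℕ → ℤ) : ℝ :=
  Hostility n h E v - Hostility (n - 1) h E (reduction n v)

/-!
Let `m` be the position of the rightmost top dinosaur of `v`, of species `μ`, and call a position
an enemy of the top if its species is at most `μ - k - 1`. Removing `m` deletes the pairs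
containing `m` and shortens by one the distance of every pair straddling `m`. As `h` is
nonincreasing and every hostile straddling pair contains an enemy of the top, this bounds
`Δ(E_k, v)` from below in terms of the sets `L`, `R` of enemies of the top to the left and to the
right of `m`. For `Mv` the top sits at `n` and the enemies of the top fill `{1, …, |L| + |R|}`, so
`Δ(E_k, Mv) = ∑_{q ≤ |L| + |R|} h (n - q)`. Writing `h` as `h (n - 1)` plus a nonnegative
combination of the indicators of the intervals `{0, …, c}` reduces the comparison to a counting
inequality for each `c`.
-/

open Finset

section Intervals

variable {M : Type*} [AddCommMonoid M]

theorem sum_Icc_eq_sum_Ico_add_sum_Icc (f : ℕ → M) {a b c : ℕ} (hab : a ≤ b) (hbc : b ≤ c + 1) :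
    ∑ i ∈ Icc a c, f i = ∑ i ∈ Ico a b, f i + ∑ i ∈ Icc b c, f i := by
  rw [← Ico_add_one_right_eq_Icc, ← Ico_add_one_right_eq_Icc, sum_Ico_consecutive _ hab hbc]

theorem sum_Icc_eq_sum_Ico_add_add_sum_Icc (f : ℕ → M) {a b c : ℕ} (hab : a ≤ b) (hbc : b ≤ c) :
    ∑ i ∈ Icc a c, f i = ∑ i ∈ Ico a b, f i + f b + ∑ i ∈ Icc (b + 1) c, f i := by
  rw [sum_Icc_eq_sum_Ico_add_sum_Icc f hab (by omega),
    sum_Icc_eq_sum_Ico_add_sum_Icc f (Nat.le_succ b) (by omega), Nat.Ico_succ_singleton,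
    sum_singleton, add_assoc]

theorem sum_Icc_add_one (f : ℕ → M) (a b : ℕ) :
    ∑ i ∈ Icc a b, f (i + 1) = ∑ i ∈ Icc (a + 1) (b + 1), f i := by
  rw [← map_add_right_Icc, sum_map]
  rfl

end Intervals

section Telescoping

variable {G : Type*} [AddCommGroup G] (h : ℕ → G)

theorem sum_Icc_sub_pred {a b : ℕ} (hab : a ≤ b) :
    ∑ i ∈ Icc (a + 1) b, (h i - h (i - 1)) = h b - h a := by
  induction b, hab using Nat.le_induction with
  | base => simp
  | succ b hab ih => rw [sum_Icc_succ_top (by omega), ih, Nat.add_sub_cancel]; abel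

theorem sum_Icc_sub_sub_one {x m n : ℕ} (hmn : m ≤ n) :
    ∑ y ∈ Icc (m + 1) n, (h (y - x) - h (y - x - 1)) = h (n - x) - h (m - x) := by
  rw [← sum_Icc_sub_pred (fun y => h (y - x)) hmn]
  exact sum_congr rfl fun y _ => by rw [Nat.sub_right_comm]

theorem sum_Ico_sub_sub_one {y m : ℕ} (hm : 1 ≤ m) :
    ∑ x ∈ Ico 1 m, (h (y - x) - h (y - x - 1)) = h (y - 1) - h (y - m) := by
  rw [← neg_sub, ← sum_Ico_sub (fun x => h (y - x)) hm, ← sum_neg_distrib]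
  exact sum_congr rfl fun x _ => by rw [neg_sub, Nat.sub_sub]

end Telescoping

theorem sum_filter_product_or {α β G : Type*} [DecidableEq α] [DecidableEq β] [AddCommGroup G]
    (s : Finset α) (t : Finset β) (p : α → Prop) (q : β → Prop) [DecidablePred p]
    [DecidablePred q] (f : α × β → G) :
    ∑ x ∈ (s ×ˢ t).filter (fun x => p x.1 ∨ q x.2), f x
      = ∑ x ∈ s.filter p ×ˢ t, f x + ∑ x ∈ s ×ˢ t.filter q, f x
        - ∑ x ∈ s.filter p ×ˢ t.filter q, f x := by
  rw [filter_or, eq_sub_iff_add_eq, ← filter_product, filter_and, filter_product_left,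
    filter_product_right, sum_union_inter]

section Layercake

variable {G : Type*} [AddCommGroup G] {ι : Type*}

theorem sum_range_ite_sub_succ (h : ℕ → G) {a N : ℕ} (ha : a ≤ N) :
    ∑ c ∈ range N, (if a ≤ c then h c - h (c + 1) else 0) = h a - h N := by
  have hfilter : (range N).filter (a ≤ ·) = Ico a N := by
    ext c; simp only [mem_filter, mem_range, mem_Ico]; omega
  rw [← sum_filter, hfilter, ← neg_sub, ← sum_Ico_sub _ ha, ← sum_neg_distrib]
  simp

theorem sum_comp_eq_layercake (h : ℕ → G) (s : Finset ι) (w : ι → ℕ) {N : ℕ}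
    (hw : ∀ i ∈ s, w i ≤ N) :
    ∑ i ∈ s, h (w i)
      = #s • h N + ∑ c ∈ range N, #(s.filter (w · ≤ c)) • (h c - h (c + 1)) := by
  have hpt : ∀ i ∈ s, h (w i) = h N + ∑ c ∈ range N, if w i ≤ c then h c - h (c + 1) else 0 :=
    fun i hi => by rw [sum_range_ite_sub_succ h (hw i hi)]; abel
  rw [sum_congr rfl hpt, sum_add_distrib, sum_const, sum_comm]
  congr 1
  exact sum_congr rfl fun c _ => by rw [← sum_filter, sum_const]

theorem sum_sub_comp_succ_eq (h : ℕ → G) (s : Finset ι) (w : ι → ℕ) {N : ℕ}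
    (hw : ∀ i ∈ s, w i < N) :
    ∑ i ∈ s, (h (w i) - h (w i + 1))
      = ∑ c ∈ range N, #(s.filter (w · = c)) • (h c - h (c + 1)) := by
  have hpt : ∀ i ∈ s, h (w i) - h (w i + 1)
      = ∑ c ∈ range N, if w i = c then h c - h (c + 1) else 0 :=
    fun i hi => by rw [sum_ite_eq, if_pos (mem_range.2 (hw i hi))]
  rw [sum_congr rfl hpt, sum_comm]
  exact sum_congr rfl fun c _ => by rw [← sum_filter, sum_const]

end Layercake

theorem card_filter_Icc_sub_le {n c : ℕ} (hc : c < n) (L R : Finset ℕ) (hL : L ⊆ Icc 1 n)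
    (hR : R ⊆ Icc 1 n) :
    #((Icc 1 (#L + #R)).filter (n - · ≤ c))
      ≤ #(L.filter (n - · ≤ c)) + #(R.filter (· - 1 ≤ c))
        + #((L ×ˢ R).filter fun p => p.2 - p.1 - 1 = c) := by
  set L' := L.filter fun x => ¬n - x ≤ c
  set R' := (R.filter fun y => ¬y - 1 ≤ c).image (· - (c + 1))
  have hLsplit : #(L.filter (n - · ≤ c)) + #L' = #L := card_filter_add_card_filter_not _
  have hRsplit : #(R.filter (· - 1 ≤ c)) + #(R.filter fun y => ¬y - 1 ≤ c) = #R :=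
    card_filter_add_card_filter_not _
  have hR' : #R' = #(R.filter fun y => ¬y - 1 ≤ c) := by
    refine card_image_of_injOn fun a ha b hb hab => ?_
    simp only [coe_filter, Set.mem_ofPred_eq] at ha hb hab
    omega
  -- After shifting `R'` down by `c + 1`, both `L'` and `R'` fit in `{1, …, n - c - 1}`.
  have hunion : #(L' ∪ R') ≤ n - c - 1 := by
    refine (card_le_card fun z hz => ?_).trans (Nat.card_Icc 1 (n - c - 1)).le
    simp only [L', R', mem_union, mem_filter, mem_image] at hz
    rw [mem_Icc]
    rcases hz with ⟨hzL, hz⟩ | ⟨y, ⟨hyR, hy⟩, rfl⟩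
    · have := mem_Icc.1 (hL hzL); omega
    · have := mem_Icc.1 (hR hyR); omega
  have hinter : #(L' ∩ R') ≤ #((L ×ˢ R).filter fun p => p.2 - p.1 - 1 = c) := by
    refine card_le_card_of_injOn (fun z => (z, z + (c + 1))) (fun z hz => ?_)
      (fun a _ b _ hab => congrArg Prod.fst hab)
    simp only [L', R', coe_inter, coe_filter, coe_image, Set.mem_inter_iff, Set.mem_ofPred_eq,
      Set.mem_image] at hz
    obtain ⟨⟨hzL, -⟩, y, ⟨hyR, hy⟩, rfl⟩ := hz
    simp only [coe_filter, mem_product, Set.mem_ofPred_eq]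
    refine ⟨⟨hzL, ?_⟩, by omega⟩
    rwa [Nat.sub_add_cancel (by omega)]
  have hlhs : (Icc 1 (#L + #R)).filter (n - · ≤ c) = Icc (n - c) (#L + #R) := by
    ext q; simp only [mem_filter, mem_Icc]; omega
  have hcard : #(Icc (n - c) (#L + #R)) = #L + #R + 1 - (n - c) := Nat.card_Icc _ _
  have := card_union_add_card_inter L' R'
  rw [hlhs, hcard]
  omega

theorem sum_Icc_card_add_card_le {G : Type*} [AddCommGroup G] [PartialOrder G]
    [IsOrderedAddMonoid G] {n : ℕ} {h : ℕ → G} (hanti : AntitoneOn h (Set.Iic (n - 1)))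
    (L R : Finset ℕ) (hL : L ⊆ Icc 1 n) (hR : R ⊆ Icc 1 n) (hLR : ∀ x ∈ L, ∀ y ∈ R, x < y) :
    ∑ q ∈ Icc 1 (#L + #R), h (n - q)
      ≤ ∑ x ∈ L, h (n - x) + ∑ y ∈ R, h (y - 1)
        + ∑ p ∈ L ×ˢ R, (h (p.2 - p.1 - 1) - h (p.2 - p.1)) := by
  have hδ : ∀ c ∈ range (n - 1), 0 ≤ h c - h (c + 1) := fun c hc => by
    rw [mem_range] at hc
    exact sub_nonneg.2 (hanti (by simp only [Set.mem_Iic]; omega)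
      (by simp only [Set.mem_Iic]; omega) (by omega))
  have hpairs : ∑ p ∈ L ×ˢ R, (h (p.2 - p.1 - 1) - h (p.2 - p.1))
      = ∑ p ∈ L ×ˢ R, (h (p.2 - p.1 - 1) - h (p.2 - p.1 - 1 + 1)) :=
    sum_congr rfl fun p hp => by
      rw [mem_product] at hp
      rw [Nat.sub_add_cancel (Nat.sub_pos_of_lt (hLR _ hp.1 _ hp.2))]
  rw [hpairs,
    sum_comp_eq_layercake h _ (n - ·) (N := n - 1) fun q hq => by rw [mem_Icc] at hq; omega,
    sum_comp_eq_layercake h _ (n - ·) (N := n - 1) fun x hx => by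
      have := mem_Icc.1 (hL hx); omega,
    sum_comp_eq_layercake h _ (· - 1) (N := n - 1) fun y hy => by
      have := mem_Icc.1 (hR hy); omega,
    sum_sub_comp_succ_eq h _ (fun p : ℕ × ℕ => p.2 - p.1 - 1) (N := n - 1) fun p hp => by
      rw [mem_product] at hp
      have := mem_Icc.1 (hL hp.1); have := mem_Icc.1 (hR hp.2); have := hLR _ hp.1 _ hp.2
      omega,
    Nat.card_Icc, Nat.add_sub_cancel, add_nsmul]
  have hlayers := sum_le_sum fun c hc => nsmul_le_nsmul_left (hδ c hc)
    (card_filter_Icc_sub_le (c := c) (by have := mem_range.1 hc; omega) L R hL hR)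
  simp only [add_nsmul, sum_add_distrib] at hlayers
  rw [← sub_nonneg] at hlayers ⊢
  convert hlayers using 1
  abel

section Rearrangement

variable {n : ℕ} {u : ℕ → ℤ}

theorem finite_image_Icc (n : ℕ) (u : ℕ → ℤ) : (u '' {i | 1 ≤ i ∧ i ≤ n}).Finite :=
  (Set.finite_Icc 1 n).image u

theorem le_maxVal {i : ℕ} (hi1 : 1 ≤ i) (hin : i ≤ n) : u i ≤ maxVal n u :=
  le_csSup (finite_image_Icc n u).bddAbove ⟨i, ⟨hi1, hin⟩, rfl⟩

theorem maxVal_le_iff (hn : 1 ≤ n) {j : ℤ} :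
    maxVal n u ≤ j ↔ ∀ i, 1 ≤ i → i ≤ n → u i ≤ j := by
  rw [maxVal, csSup_le_iff (finite_image_Icc n u).bddAbove ⟨u 1, 1, ⟨le_rfl, hn⟩, rfl⟩]
  simp only [Set.forall_mem_image, Set.mem_ofPred_eq, and_imp]

theorem maxIdx_spec (hn : 1 ≤ n) :
    1 ≤ maxIdx n u ∧ maxIdx n u ≤ n ∧ u (maxIdx n u) = maxVal n u := by
  have hne : (u '' {i | 1 ≤ i ∧ i ≤ n}).Nonempty := ⟨u 1, 1, ⟨le_rfl, hn⟩, rfl⟩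
  obtain ⟨i, ⟨hi1, hin⟩, hi⟩ := hne.csSup_mem (finite_image_Icc n u)
  exact Nat.sSup_mem (s := {i | 1 ≤ i ∧ i ≤ n ∧ u i = maxVal n u}) ⟨i, hi1, hin, hi⟩
    ⟨n, fun _ hj => hj.2.1⟩

theorem maxIdx_eq_self (hn : 1 ≤ n) (hu : u n = maxVal n u) : maxIdx n u = n := by
  have hmem : n ∈ {i | 1 ≤ i ∧ i ≤ n ∧ u i = maxVal n u} := ⟨hn, le_rfl, hu⟩
  exact le_antisymm (csSup_le ⟨n, hmem⟩ fun _ hi => hi.2.1)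
    (le_csSup ⟨n, fun _ hi => hi.2.1⟩ hmem)

theorem Mrearr_le_iff {x : ℕ} (hx1 : 1 ≤ x) (hxn : x ≤ n) {j : ℤ} :
    Mrearr n u x ≤ j ↔ x ≤ #((Icc 1 n).filter (u · ≤ j)) := by
  have hmono : Monotone fun j : ℤ => #((Icc 1 n).filter (u · ≤ j)) := fun _ _ hj =>
    card_le_card (monotone_filter_right _ fun _ _ hy => hy.trans hj)
  have hne : {j : ℤ | x ≤ #((Icc 1 n).filter (u · ≤ j))}.Nonempty := by
    refine ⟨maxVal n u, ?_⟩
    rw [Set.mem_ofPred_eq, filter_true_of_mem fun y hy => le_maxVal (mem_Icc.1 hy).1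
      (mem_Icc.1 hy).2, Nat.card_Icc]
    omega
  obtain ⟨b, hb⟩ := (finite_image_Icc n u).bddBelow
  have hbdd : BddBelow {j : ℤ | x ≤ #((Icc 1 n).filter (u · ≤ j))} := by
    refine ⟨b, fun j hj => ?_⟩
    obtain ⟨y, hy⟩ := card_pos.1 (lt_of_lt_of_le hx1 hj)
    rw [mem_filter, mem_Icc] at hy
    exact (hb ⟨y, hy.1, rfl⟩).trans hy.2
  exact ⟨fun hle => (Int.csInf_mem hne hbdd).trans (hmono hle), fun hj => csInf_le hbdd hj⟩

theorem Mrearr_le_Mrearr {x y : ℕ} (hx1 : 1 ≤ x) (hxy : x ≤ y) (hyn : y ≤ n) :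
    Mrearr n u x ≤ Mrearr n u y :=
  (Mrearr_le_iff hx1 (hxy.trans hyn)).2 <|
    hxy.trans ((Mrearr_le_iff (hx1.trans hxy) hyn).1 le_rfl)

theorem Mrearr_self (hn : 1 ≤ n) : Mrearr n u n = maxVal n u := by
  refine eq_of_forall_ge_iff fun j => ?_
  rw [Mrearr_le_iff hn le_rfl, maxVal_le_iff hn]
  have hle := card_filter_le (Icc 1 n) (u · ≤ j)
  rw [Nat.card_Icc] at hle
  rw [show n ≤ #((Icc 1 n).filter (u · ≤ j)) ↔ #((Icc 1 n).filter (u · ≤ j)) = #(Icc 1 n) by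
    rw [Nat.card_Icc]; omega, card_filter_eq_iff]
  simp only [mem_Icc, and_imp]

theorem maxVal_Mrearr (hn : 1 ≤ n) : maxVal n (Mrearr n u) = maxVal n u := by
  refine le_antisymm ((maxVal_le_iff hn).2 fun i hi1 hin => ?_) ?_
  · exact (Mrearr_self hn).symm ▸ Mrearr_le_Mrearr hi1 hin le_rfl
  · exact Mrearr_self (u := u) hn ▸ le_maxVal hn le_rfl

theorem maxIdx_Mrearr (hn : 1 ≤ n) : maxIdx n (Mrearr n u) = n :=
  maxIdx_eq_self hn ((Mrearr_self hn).trans (maxVal_Mrearr hn).symm)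

end Rearrangement

open Classical in
def pairHostility (h : ℕ → ℝ) (E : Set (ℤ × ℤ)) (u : ℕ → ℤ) (x y : ℕ) : ℝ :=
  if (u x, u y) ∈ E then h (y - x) else 0

def eraseAt (m : ℕ) (u : ℕ → ℤ) (i : ℕ) : ℤ := if i < m then u i else u (i + 1)

section Decomposition

variable (h : ℕ → ℝ) (E : Set (ℤ × ℤ)) (u : ℕ → ℤ) {n m : ℕ}

theorem pairHostility_congr {h' : ℕ → ℝ} {u' : ℕ → ℤ} {x' y' x y : ℕ} (hx : u' x' = u x)
    (hy : u' y' = u y) (hd : h' (y' - x') = h (y - x)) :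
    pairHostility h' E u' x' y' = pairHostility h E u x y := by
  rw [pairHostility, pairHostility, hx, hy, hd]

theorem hostility_eq_sum_sum_pairHostility :
    Hostility n h E u = ∑ x ∈ Icc 1 n, ∑ y ∈ Icc x n, pairHostility h E u x y := rfl

theorem hostility_split (hm1 : 1 ≤ m) (hmn : m ≤ n) :
    Hostility n h E u
      = ∑ x ∈ Ico 1 m, ∑ y ∈ Ico x m, pairHostility h E u x y
        + (∑ x ∈ Ico 1 m, pairHostility h E u x m + ∑ y ∈ Icc m n, pairHostility h E u m y)
        + ∑ p ∈ Ico 1 m ×ˢ Icc (m + 1) n, pairHostility h E u p.1 p.2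
        + ∑ x ∈ Icc (m + 1) n, ∑ y ∈ Icc x n, pairHostility h E u x y := by
  have hrow : ∀ x ∈ Ico 1 m, ∑ y ∈ Icc x n, pairHostility h E u x y
      = ∑ y ∈ Ico x m, pairHostility h E u x y + pairHostility h E u x m
        + ∑ y ∈ Icc (m + 1) n, pairHostility h E u x y :=
    fun x hx => sum_Icc_eq_sum_Ico_add_add_sum_Icc _ (mem_Ico.1 hx).2.le hmn
  rw [hostility_eq_sum_sum_pairHostility, sum_Icc_eq_sum_Ico_add_add_sum_Icc _ hm1 hmn,
    sum_congr rfl hrow, sum_add_distrib, sum_add_distrib, sum_product]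
  abel

/-- Deleting position `m` shortens exactly the distances across `m`, by one. -/
theorem hostility_eraseAt (hm1 : 1 ≤ m) (hmn : m ≤ n + 1) :
    Hostility n h E (eraseAt m u)
      = ∑ x ∈ Ico 1 m, ∑ y ∈ Ico x m, pairHostility h E u x y
        + ∑ p ∈ Ico 1 m ×ˢ Icc (m + 1) (n + 1), pairHostility (fun d => h (d - 1)) E u p.1 p.2
        + ∑ x ∈ Icc (m + 1) (n + 1), ∑ y ∈ Icc x (n + 1), pairHostility h E u x y := by
  have hrow : ∀ x ∈ Ico 1 m, ∑ y ∈ Icc x n, pairHostility h E (eraseAt m u) x y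
      = ∑ y ∈ Ico x m, pairHostility h E u x y
        + ∑ y ∈ Icc (m + 1) (n + 1), pairHostility (fun d => h (d - 1)) E u x y := by
    intro x hx
    rw [mem_Ico] at hx
    rw [sum_Icc_eq_sum_Ico_add_sum_Icc _ hx.2.le hmn, ← sum_Icc_add_one]
    congr 1 <;> refine sum_congr rfl fun y hy => ?_
    · exact pairHostility_congr h E u (if_pos hx.2) (if_pos (mem_Ico.1 hy).2) rfl
    · simp only [mem_Icc] at hy
      refine pairHostility_congr _ E u (if_pos hx.2) (if_neg (by omega)) ?_
      rw [Nat.sub_right_comm, Nat.add_sub_cancel]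
  have htail : ∑ x ∈ Icc m n, ∑ y ∈ Icc x n, pairHostility h E (eraseAt m u) x y
      = ∑ x ∈ Icc (m + 1) (n + 1), ∑ y ∈ Icc x (n + 1), pairHostility h E u x y := by
    rw [← sum_Icc_add_one]
    refine sum_congr rfl fun x hx => ?_
    rw [← sum_Icc_add_one]
    refine sum_congr rfl fun y hy => ?_
    simp only [mem_Icc] at hx hy
    exact pairHostility_congr h E u (if_neg (by omega)) (if_neg (by omega))
      (by rw [Nat.add_sub_add_right])
  rw [hostility_eq_sum_sum_pairHostility, sum_Icc_eq_sum_Ico_add_sum_Icc _ hm1 hmn,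
    sum_congr rfl hrow, sum_add_distrib, htail, sum_product]

theorem hostilityGap_eq (hn : 1 ≤ n) :
    hostilityGap n h E u
      = ∑ x ∈ Ico 1 (maxIdx n u), pairHostility h E u x (maxIdx n u)
        + ∑ y ∈ Icc (maxIdx n u) n, pairHostility h E u (maxIdx n u) y
        + ∑ p ∈ Ico 1 (maxIdx n u) ×ˢ Icc (maxIdx n u + 1) n,
            (pairHostility h E u p.1 p.2 - pairHostility (fun d => h (d - 1)) E u p.1 p.2) := by
  obtain ⟨hm1, hmn, -⟩ := maxIdx_spec (u := u) hn
  obtain ⟨n, rfl⟩ : ∃ n', n = n' + 1 := ⟨n - 1, by omega⟩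
  rw [hostilityGap, Nat.add_sub_cancel, hostility_split h E u hm1 hmn,
    show reduction (n + 1) u = eraseAt (maxIdx (n + 1) u) u from rfl,
    hostility_eraseAt h E u hm1 hmn, sum_sub_distrib]
  abel

end Decomposition

def enemiesOfTop (n k : ℕ) (u : ℕ → ℤ) (s : Finset ℕ) : Finset ℕ :=
  s.filter fun x => u x ≤ maxVal n u - (k + 1)

section EnemyList

variable {k : ℕ} {a b μ : ℤ}

theorem mem_enemyList_top_left_iff (ha : a ≤ μ) : (a, μ) ∈ enemyList k ↔ a ≤ μ - (k + 1) := by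
  rw [enemyList, Set.mem_ofPred_eq, abs_of_nonneg (by omega)]
  omega

theorem mem_enemyList_top_right_iff (ha : a ≤ μ) : (μ, a) ∈ enemyList k ↔ a ≤ μ - (k + 1) := by
  rw [enemyList, Set.mem_ofPred_eq, abs_of_nonpos (by omega)]
  omega

theorem le_sub_or_le_sub_of_mem_enemyList (ha : a ≤ μ) (hb : b ≤ μ)
    (hab : (a, b) ∈ enemyList k) : a ≤ μ - (k + 1) ∨ b ≤ μ - (k + 1) := by
  rw [enemyList, Set.mem_ofPred_eq, le_abs] at hab
  omega

variable (h : ℕ → ℝ) {n m : ℕ} {u : ℕ → ℤ}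

theorem sum_pairHostility_enemyList_top (hm1 : 1 ≤ m) (hmn : m ≤ n) (hum : u m = maxVal n u) :
    ∑ x ∈ Ico 1 m, pairHostility h (enemyList k) u x m
        + ∑ y ∈ Icc m n, pairHostility h (enemyList k) u m y
      = ∑ x ∈ enemiesOfTop n k u (Ico 1 m), h (m - x)
        + ∑ y ∈ enemiesOfTop n k u (Icc (m + 1) n), h (y - m) := by
  classical
  have hmm : pairHostility h (enemyList k) u m m = 0 := by
    rw [pairHostility, if_neg]
    rw [enemyList, Set.mem_ofPred_eq, sub_self, abs_zero]
    omega
  rw [sum_Icc_eq_sum_Ico_add_add_sum_Icc _ le_rfl hmn, Ico_self, sum_empty, hmm, zero_add,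
    zero_add, enemiesOfTop, enemiesOfTop, sum_filter, sum_filter]
  congr 1 <;> refine sum_congr rfl fun x hx => ?_ <;> rw [pairHostility, hum]
  · have := mem_Ico.1 hx
    exact if_congr (mem_enemyList_top_left_iff (le_maxVal this.1 (by omega))) rfl rfl
  · have := mem_Icc.1 hx
    exact if_congr (mem_enemyList_top_right_iff (le_maxVal (by omega) this.2)) rfl rfl

end EnemyList

section Gap

variable (h : ℕ → ℝ) {n k m : ℕ} {u : ℕ → ℤ}

/-- Every hostile pair straddling the top dinosaur contains an enemy of the top species, and the
contribution of a pair to the gap is `h (y - x) - h (y - x - 1) ≤ 0`. -/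
theorem le_sum_pairHostility_sub (hanti : AntitoneOn h (Set.Iic (n - 1))) (hmn : m ≤ n) :
    ∑ p ∈ enemiesOfTop n k u (Ico 1 m) ×ˢ Icc (m + 1) n, (h (p.2 - p.1) - h (p.2 - p.1 - 1))
        + ∑ p ∈ Ico 1 m ×ˢ enemiesOfTop n k u (Icc (m + 1) n), (h (p.2 - p.1) - h (p.2 - p.1 - 1))
        - ∑ p ∈ enemiesOfTop n k u (Ico 1 m) ×ˢ enemiesOfTop n k u (Icc (m + 1) n),
            (h (p.2 - p.1) - h (p.2 - p.1 - 1))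
      ≤ ∑ p ∈ Ico 1 m ×ˢ Icc (m + 1) n, (pairHostility h (enemyList k) u p.1 p.2
          - pairHostility (fun d => h (d - 1)) (enemyList k) u p.1 p.2) := by
  rw [enemiesOfTop, enemiesOfTop, ← sum_filter_product_or, sum_filter]
  refine sum_le_sum fun p hp => ?_
  rw [mem_product, mem_Ico, mem_Icc] at hp
  have hd : h (p.2 - p.1) - h (p.2 - p.1 - 1) ≤ 0 := sub_nonpos.2 <|
    hanti (by simp only [Set.mem_Iic]; omega) (by simp only [Set.mem_Iic]; omega) (by omega)
  simp only [pairHostility]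
  by_cases hE : (u p.1, u p.2) ∈ enemyList k
  · rw [if_pos hE, if_pos hE, if_pos (le_sub_or_le_sub_of_mem_enemyList
      (le_maxVal hp.1.1 (by omega)) (le_maxVal (by omega) hp.2.2) hE)]
  · rw [if_neg hE, if_neg hE, sub_self]
    split_ifs <;> simp [hd]

theorem le_hostilityGap_enemyList (hn : 1 ≤ n) (hanti : AntitoneOn h (Set.Iic (n - 1))) :
    ∑ x ∈ enemiesOfTop n k u (Ico 1 (maxIdx n u)), h (n - x)
        + ∑ y ∈ enemiesOfTop n k u (Icc (maxIdx n u + 1) n), h (y - 1)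
        + ∑ p ∈ enemiesOfTop n k u (Ico 1 (maxIdx n u)) ×ˢ
            enemiesOfTop n k u (Icc (maxIdx n u + 1) n), (h (p.2 - p.1 - 1) - h (p.2 - p.1))
      ≤ hostilityGap n h (enemyList k) u := by
  obtain ⟨hm1, hmn, hum⟩ := maxIdx_spec (u := u) hn
  rw [hostilityGap_eq h _ u hn, sum_pairHostility_enemyList_top h hm1 hmn hum]
  have hcross := le_sum_pairHostility_sub h (k := k) (u := u) hanti hmn
  set m := maxIdx n u
  set L := enemiesOfTop n k u (Ico 1 m)
  set R := enemiesOfTop n k u (Icc (m + 1) n)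
  have hleft : ∑ p ∈ L ×ˢ Icc (m + 1) n, (h (p.2 - p.1) - h (p.2 - p.1 - 1))
      = ∑ x ∈ L, h (n - x) - ∑ x ∈ L, h (m - x) := by
    rw [sum_product, ← sum_sub_distrib]
    exact sum_congr rfl fun x _ => sum_Icc_sub_sub_one h hmn
  have hright : ∑ p ∈ Ico 1 m ×ˢ R, (h (p.2 - p.1) - h (p.2 - p.1 - 1))
      = ∑ y ∈ R, h (y - 1) - ∑ y ∈ R, h (y - m) := by
    rw [sum_product_right, ← sum_sub_distrib]
    exact sum_congr rfl fun y _ => sum_Ico_sub_sub_one h hm1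
  have hpairs : ∑ p ∈ L ×ˢ R, (h (p.2 - p.1 - 1) - h (p.2 - p.1))
      = -∑ p ∈ L ×ˢ R, (h (p.2 - p.1) - h (p.2 - p.1 - 1)) := by
    rw [← sum_neg_distrib]
    simp only [neg_sub]
  linarith

theorem card_enemiesOfTop_Icc (hm1 : 1 ≤ m) (hmn : m ≤ n) (hum : u m = maxVal n u) :
    #(enemiesOfTop n k u (Icc 1 n))
      = #(enemiesOfTop n k u (Ico 1 m)) + #(enemiesOfTop n k u (Icc (m + 1) n)) := by
  simp only [enemiesOfTop, card_filter]
  rw [sum_Icc_eq_sum_Ico_add_add_sum_Icc _ hm1 hmn, if_neg (by omega), add_zero]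

theorem hostilityGap_Mrearr (hn : 1 ≤ n) (v : ℕ → ℤ) :
    hostilityGap n h (enemyList k) (Mrearr n v)
      = ∑ q ∈ Icc 1 #(enemiesOfTop n k v (Icc 1 n)), h (n - q) := by
  have hidx : maxIdx n (Mrearr n v) = n := maxIdx_Mrearr hn
  have htop : Mrearr n v n = maxVal n (Mrearr n v) :=
    (Mrearr_self hn).trans (maxVal_Mrearr hn).symm
  rw [hostilityGap_eq h _ _ hn, hidx, sum_pairHostility_enemyList_top h hn le_rfl htop,
    Icc_eq_empty (by omega), product_empty, show enemiesOfTop n k (Mrearr n v) ∅ = ∅ from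
    filter_empty _, sum_empty, sum_empty, add_zero, add_zero]
  obtain ⟨hm1, hmn, hvm⟩ := maxIdx_spec (u := v) hn
  have ht : #(enemiesOfTop n k v (Icc 1 n)) < n := by
    have := card_lt_card (filter_ssubset (p := fun x => v x ≤ maxVal n v - (k + 1)).2
      ⟨maxIdx n v, mem_Icc.2 ⟨hm1, hmn⟩, by omega⟩)
    rwa [Nat.card_Icc, Nat.add_sub_cancel] at this
  congr 1
  ext x
  simp only [enemiesOfTop, mem_filter, mem_Ico, mem_Icc, maxVal_Mrearr hn] at ht ⊢
  constructor
  · rintro ⟨⟨hx1, hxn⟩, hx⟩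
    exact ⟨hx1, (Mrearr_le_iff hx1 hxn.le).1 hx⟩
  · rintro ⟨hx1, hxt⟩
    exact ⟨⟨hx1, by omega⟩, (Mrearr_le_iff hx1 (by omega)).2 hxt⟩

end Gap

theorem hostilityGap_rearrangement_general (n k : ℕ) (hn : 2 ≤ n)
    (h : ℕ → ℝ) (hmono : ∀ i j, i ≤ j → j ≤ n - 1 → h j ≤ h i)
    (v : ℕ → ℤ) :
    hostilityGap n h (enemyList k) (Mrearr n v) ≤ hostilityGap n h (enemyList k) v := by
  have hn1 : 1 ≤ n := by omega
  have hanti : AntitoneOn h (Set.Iic (n - 1)) := fun i _ j hj hij => hmono i j hij hj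
  obtain ⟨hm1, hmn, hvm⟩ := maxIdx_spec (u := v) hn1
  rw [hostilityGap_Mrearr h hn1, card_enemiesOfTop_Icc hm1 hmn hvm]
  refine (sum_Icc_card_add_card_le hanti _ _ ?_ ?_ ?_).trans
    (le_hostilityGap_enemyList h hn1 hanti)
  · intro x hx
    simp only [enemiesOfTop, mem_filter, mem_Ico] at hx
    exact mem_Icc.2 ⟨hx.1.1, by omega⟩
  · intro y hy
    simp only [enemiesOfTop, mem_filter, mem_Icc] at hy
    exact mem_Icc.2 ⟨by omega, hy.1.2⟩
  · intro x hx y hy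
    simp only [enemiesOfTop, mem_filter, mem_Ico, mem_Icc] at hx hy
    omega

/-- **Monotone rearrangement decreases the hostility gap** (inequality (2.8)):
`Δ(E_k, v) ≥ Δ(E_k, Mv)`. -/
theorem hostilityGap_rearrangement (n k : ℕ) (hn : 2 ≤ n) (hk : 0 < k)
    (h : ℕ → ℝ) (hmono : ∀ i j, i ≤ j → j ≤ n - 1 → h j ≤ h i)
    (v : ℕ → ℤ) :
    hostilityGap n h (enemyList k) (Mrearr n v) ≤ hostilityGap n h (enemyList k) v :=
  hostilityGap_rearrangement_general n k hn h hmono v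
end
end

section
/- Let p ≥ 1 be a real number, let u ∈ PC¹_c(ℝ) (i.e. u : ℝ → ℝ has compact support, is Lipschitz continuous, and is of class C¹ on ℝ \ S for some finite set S ⊆ ℝ), and let x ∈ ℝ \ S be a point with u'(x) = 0. Then lim_{δ→0⁺} H_{δ,p}(x) = 0, where H_{δ,p}(x) := ∫_{J(δ,u,x)} δ^p/|y−x|^{1+p} dy and J(δ,u,x) := {y ∈ ℝ : |S_δu(y) − S_δu(x)| > δ}. -/
/-! Near a stationary point, `u` is `ε`-flat for every `ε > 0`: `|u y - u x| ≤ ε |y - x|` for `y`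
close to `x`. A point `y` of the jump set `J(δ,u,x)` has `|u y - u x| > δ` (the segmentations
differ by at least `2δ` and each is within `δ` of `u`), so for small `δ` it lies at distance
`> δ/ε` from `x`. Hence `H_{δ,p}(x)` is at most the tail integral
`∫_{|y-x|>δ/ε} δ^p |y-x|^{-1-p} dy = 2ε^p/p`. -/

open MeasureTheory Filter Topology Set
open scoped ENNReal NNReal

noncomputable section

/-- The vertical `δ`-segmentation `S_δ u (x) = δ·⌊u(x)/δ⌋`. -/
def Sdelta (δ : ℝ) (u : ℝ → ℝ) (x : ℝ) : ℝ := δ * ⌊u x / δ⌋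

def jumpSet (δ : ℝ) (u : ℝ → ℝ) (x : ℝ) : Set ℝ := {y | δ < |Sdelta δ u y - Sdelta δ u x|}

def hostility (p δ : ℝ) (u : ℝ → ℝ) (x : ℝ) : ℝ≥0∞ :=
  ∫⁻ y in jumpSet δ u x, ENNReal.ofReal (δ ^ p / |y - x| ^ (1 + p))

lemma one_lt_abs_sub_of_one_lt_abs_floor_sub {s t : ℝ} (h : 1 < |⌊t⌋ - ⌊s⌋|) :
    1 < |t - s| := by
  have := Int.floor_le t
  have := Int.lt_floor_add_one t
  have := Int.floor_le s
  have := Int.lt_floor_add_one s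
  rcases lt_abs.1 h with h | h
  · have : (⌊s⌋ : ℝ) + 2 ≤ ⌊t⌋ := by exact_mod_cast (by omega : ⌊s⌋ + 2 ≤ ⌊t⌋)
    exact lt_abs.2 (Or.inl (by linarith))
  · have : (⌊t⌋ : ℝ) + 2 ≤ ⌊s⌋ := by exact_mod_cast (by omega : ⌊t⌋ + 2 ≤ ⌊s⌋)
    exact lt_abs.2 (Or.inr (by linarith))

lemma lt_abs_sub_of_mem_jumpSet {δ : ℝ} (hδ : 0 < δ) {u : ℝ → ℝ} {x y : ℝ}
    (hy : y ∈ jumpSet δ u x) : δ < |u y - u x| := by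
  have hfloor : 1 < |⌊u y / δ⌋ - ⌊u x / δ⌋| := by
    have h : δ * 1 < δ * |((⌊u y / δ⌋ - ⌊u x / δ⌋ : ℤ) : ℝ)| := by
      simpa [jumpSet, Sdelta, ← mul_sub, abs_mul, abs_of_pos hδ] using hy
    exact_mod_cast lt_of_mul_lt_mul_left h hδ.le
  have := one_lt_abs_sub_of_one_lt_abs_floor_sub hfloor
  rwa [← sub_div, abs_div, abs_of_pos hδ, one_lt_div hδ] at this

lemma jumpSet_subset_of_abs_sub_le {δ ε r : ℝ} (hδ : 0 < δ) (hε : 0 < ε) (hδr : δ < ε * r)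
    {u : ℝ → ℝ} {x : ℝ} (hflat : ∀ y, dist y x < r → |u y - u x| ≤ ε * |y - x|) :
    jumpSet δ u x ⊆ {y | δ / ε < |y - x|} := by
  intro y hy
  have hjump := lt_abs_sub_of_mem_jumpSet hδ hy
  rw [mem_ofPred_eq, div_lt_iff₀' hε]
  by_cases hyx : dist y x < r
  · exact hjump.trans_le (hflat y hyx)
  · rw [not_lt, Real.dist_eq] at hyx
    exact hδr.trans_le (mul_le_mul_of_nonneg_left hyx hε.le)

lemma setLIntegral_Ioi_div_rpow {p a c : ℝ} (hp : 0 < p) (ha : 0 < a) (hc : 0 ≤ c) :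
    ∫⁻ t in Ioi a, ENNReal.ofReal (c / t ^ (1 + p)) = ENNReal.ofReal (c * a ^ (-p) / p) := by
  have hint : IntegrableOn (fun t : ℝ => c * t ^ (-(1 + p))) (Ioi a) :=
    (integrableOn_Ioi_rpow_of_lt (by linarith) ha).const_mul c
  calc ∫⁻ t in Ioi a, ENNReal.ofReal (c / t ^ (1 + p))
      = ∫⁻ t in Ioi a, ENNReal.ofReal (c * t ^ (-(1 + p))) := by
        refine setLIntegral_congr_fun measurableSet_Ioi fun t ht => ?_
        rw [Real.rpow_neg (ha.trans ht).le, div_eq_mul_inv]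
    _ = ENNReal.ofReal (∫ t in Ioi a, c * t ^ (-(1 + p))) := by
        refine (ofReal_integral_eq_lintegral_ofReal hint ?_).symm
        filter_upwards [self_mem_ae_restrict measurableSet_Ioi] with t ht
        have := (ha.trans ht).le
        positivity
    _ = ENNReal.ofReal (c * a ^ (-p) / p) := by
        rw [integral_const_mul, integral_Ioi_rpow_of_lt (by linarith) ha,
          show -(1 + p) + 1 = -p by ring, neg_div_neg_eq, mul_div_assoc]

lemma setLIntegral_lt_abs_sub_div_rpow_le {p a c : ℝ} (hp : 0 < p) (ha : 0 < a) (hc : 0 ≤ c)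
    (x : ℝ) :
    ∫⁻ y in {y | a < |y - x|}, ENNReal.ofReal (c / |y - x| ^ (1 + p))
      ≤ ENNReal.ofReal (2 * c * a ^ (-p) / p) := by
  set f : ℝ → ℝ≥0∞ := fun t => ENNReal.ofReal (c / |t| ^ (1 + p))
  have htranslate : ∫⁻ y in {y | a < |y - x|}, f (y - x) = ∫⁻ t in {t | a < |t|}, f t :=
    (measurePreserving_sub_right volume x).setLIntegral_comp_preimage_emb
      (MeasurableEquiv.subRight x).measurableEmbedding f {t | a < |t|}
  have hreflect : ∫⁻ t in Iio (-a), f t = ∫⁻ t in Ioi a, f t := by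
    rw [← neg_Ioi, ← (Measure.measurePreserving_neg volume).setLIntegral_comp_preimage_emb
      (MeasurableEquiv.neg ℝ).measurableEmbedding f (Ioi a)]
    simp only [f, abs_neg, neg_preimage, neg_Ioi]
  have hhalf : ∫⁻ t in Ioi a, f t = ENNReal.ofReal (c * a ^ (-p) / p) := by
    rw [← setLIntegral_Ioi_div_rpow hp ha hc]
    exact setLIntegral_congr_fun measurableSet_Ioi fun t ht => by
      simp only [f, abs_of_pos (ha.trans ht)]
  have hsplit : {t : ℝ | a < |t|} = Iio (-a) ∪ Ioi a := by
    ext t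
    simp only [mem_ofPred_eq, lt_abs, mem_union, mem_Iio, mem_Ioi, lt_neg]
    tauto
  calc ∫⁻ y in {y | a < |y - x|}, f (y - x)
      = ∫⁻ t in {t | a < |t|}, f t := htranslate
    _ ≤ (∫⁻ t in Iio (-a), f t) + ∫⁻ t in Ioi a, f t := by
        rw [hsplit]
        exact lintegral_union_le _ _ _
    _ = ENNReal.ofReal (2 * c * a ^ (-p) / p) := by
        rw [hreflect, hhalf, ← ENNReal.ofReal_add (by positivity) (by positivity)]
        ring_nf

lemma hostility_eventually_le {p : ℝ} (hp : 0 < p) {u : ℝ → ℝ} {x : ℝ} (hu : HasDerivAt u 0 x)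
    {ε : ℝ} (hε : 0 < ε) :
    ∀ᶠ δ in 𝓝[>] 0, hostility p δ u x ≤ ENNReal.ofReal (2 * ε ^ p / p) := by
  obtain ⟨r, hr, hflat⟩ := Metric.eventually_nhds_iff.1 ((hasDerivAt_iff_isLittleO.1 hu).def hε)
  filter_upwards [Ioo_mem_nhdsGT (mul_pos hε hr)] with δ ⟨hδ, hδr⟩
  have hJ : jumpSet δ u x ⊆ {y | δ / ε < |y - x|} :=
    jumpSet_subset_of_abs_sub_le hδ hε hδr fun y hy => by simpa using hflat hy
  calc hostility p δ u x
      ≤ ∫⁻ y in {y | δ / ε < |y - x|}, ENNReal.ofReal (δ ^ p / |y - x| ^ (1 + p)) :=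
        lintegral_mono_set hJ
    _ ≤ ENNReal.ofReal (2 * δ ^ p * (δ / ε) ^ (-p) / p) :=
        setLIntegral_lt_abs_sub_div_rpow_le hp (div_pos hδ hε) (by positivity) x
    _ = ENNReal.ofReal (2 * ε ^ p / p) := by
        rw [Real.rpow_neg (div_pos hδ hε).le, Real.div_rpow hδ.le hε.le, inv_div, mul_assoc,
          mul_div_cancel₀ _ (Real.rpow_pos_of_pos hδ p).ne']

theorem pointwise_hostility_vanishes_at_stationary_points_general (p : ℝ) (hp : 1 ≤ p)
    (u : ℝ → ℝ)
    (S : Finset ℝ) (hC1 : ∀ y : ℝ, y ∉ S → ContDiffAt ℝ 1 u y)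
    (x : ℝ) (hx : x ∉ S) (hx' : deriv u x = 0) :
    Tendsto (fun δ => ∫⁻ y in {y : ℝ | δ < |Sdelta δ u y - Sdelta δ u x|},
        ENNReal.ofReal (δ ^ p / |y - x| ^ (1 + p)))
      (𝓝[>] (0 : ℝ)) (𝓝 0) := by
  change Tendsto (fun δ => hostility p δ u x) (𝓝[>] 0) (𝓝 0)
  have hp0 : 0 < p := by linarith
  have hu : HasDerivAt u 0 x := hx' ▸ ((hC1 x hx).differentiableAt one_ne_zero).hasDerivAt
  have hbound : Tendsto (fun ε : ℝ => ENNReal.ofReal (2 * ε ^ p / p)) (𝓝[>] 0) (𝓝 0) := by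
    have : ContinuousAt (fun ε : ℝ => ENNReal.ofReal (2 * ε ^ p / p)) 0 := by
      have := Real.continuousAt_rpow_const 0 p (Or.inr hp0.le)
      exact ENNReal.continuous_ofReal.continuousAt.comp (by fun_prop)
    simpa [Real.zero_rpow hp0.ne'] using this.tendsto.mono_left nhdsWithin_le_nhds
  refine ENNReal.tendsto_nhds_zero.2 fun η hη => ?_
  obtain ⟨ε, hεη, hε⟩ := ((hbound.eventually (gt_mem_nhds hη)).and self_mem_nhdsWithin).exists
  exact (hostility_eventually_le hp0 hu hε).mono fun δ hδ => hδ.trans hεη.le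

/-- **Asymptotic estimate at stationary points**: for a piecewise `C¹` function `u` with
compact support and a point `x ∉ S` with `u'(x) = 0`, the pointwise hostility
`H_{δ,p}(x) = ∫_{J(δ,u,x)} δ^p/|y−x|^{1+p} dy` tends to `0` as `δ → 0⁺`. -/
theorem pointwise_hostility_vanishes_at_stationary_points (p : ℝ) (hp : 1 ≤ p)
    (u : ℝ → ℝ) (hsupp : HasCompactSupport u)
    (L : ℝ≥0) (hlip : LipschitzWith L u)
    (S : Finset ℝ) (hC1 : ∀ y : ℝ, y ∉ S → ContDiffAt ℝ 1 u y)
    (x : ℝ) (hx : x ∉ S) (hx' : deriv u x = 0) :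
    Tendsto (fun δ => ∫⁻ y in {y : ℝ | δ < |Sdelta δ u y - Sdelta δ u x|},
        ENNReal.ofReal (δ ^ p / |y - x| ^ (1 + p)))
      (𝓝[>] (0 : ℝ)) (𝓝 0) :=
  pointwise_hostility_vanishes_at_stationary_points_general p hp u S hC1 x hx hx'
end
end
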